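/- Let A ∈ ℂ^{n×n} with minimal polynomial m of degree l, and let u, v ∈ ℂ^n be such that the polynomial p_{uv}(λ) = m(λ)·vᵀ(λ I - A)⁻¹u has degree l - 1 and no common root with m. Then for every τ ∈ ℂ \ {0}, the matrix A + τ u vᵀ has exactly l eigenvalues, counted with algebraic multiplicity, that are not eigenvalues of A; these are precisely the roots of m(λ) - τ p_{uv}(λ). -/

import Mathlib

/-!
By the matrix determinant lemma, `χ_{A + τ u vᵀ}(z) = χ_A(z) (1 - τ vᵀ (z I - A)⁻¹ u)` away from
the spectrum of `A`; multiplying by `m(z)` and using infinitely many `z` gives the polynomial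
identity `χ_{A + τ u vᵀ} · m = χ_A · (m - τ p)`. All roots of `m` and of `χ_A` are eigenvalues of
`A`, while no root of `m - τ p` is one (`m` and `p` would vanish there together), so the roots of
`χ_{A + τ u vᵀ}` outside the spectrum are exactly those of `m - τ p`. Comparing degrees in the
identity gives `deg (m - τ p) = deg m`, and over `ℂ` this is the number of roots.
-/

open Matrix Polynomial Classical

namespace Polynomial

variable {R : Type*} [CommRing R] [IsDomain R]

theorem natDegree_eq_of_mul_eq_mul {f g a b : R[X]} (h : f * g = a * b) (hf : f ≠ 0)
    (hg : g ≠ 0) (hfa : f.natDegree = a.natDegree) : g.natDegree = b.natDegree := by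
  have hab : a * b ≠ 0 := h ▸ mul_ne_zero hf hg
  have hdeg := congrArg natDegree h
  rw [natDegree_mul hf hg, natDegree_mul (left_ne_zero_of_mul hab) (right_ne_zero_of_mul hab),
    hfa] at hdeg
  omega

theorem filter_roots_eq_roots_of_mul_eq_mul {f g a b : R[X]} {S : Set R} (h : f * g = a * b)
    (hf : f ≠ 0) (hg : g ≠ 0) (hgS : ∀ z, g.IsRoot z → z ∈ S) (haS : ∀ z, a.IsRoot z → z ∈ S)
    (hbS : ∀ z, b.IsRoot z → z ∉ S) :
    f.roots.filter (· ∉ S) = b.roots := by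
  have hab : a * b ≠ 0 := h ▸ mul_ne_zero hf hg
  have hroots : f.roots + g.roots = a.roots + b.roots := by
    rw [← roots_mul (mul_ne_zero hf hg), h, roots_mul hab]
  have hfilter := congrArg (Multiset.filter (· ∉ S)) hroots
  rwa [Multiset.filter_add, Multiset.filter_add,
    Multiset.filter_eq_nil.2 fun z hz ↦ not_not.2 (hgS z (isRoot_of_mem_roots hz)),
    Multiset.filter_eq_nil.2 fun z hz ↦ not_not.2 (haS z (isRoot_of_mem_roots hz)),
    Multiset.filter_eq_self.2 fun z hz ↦ hbS z (isRoot_of_mem_roots hz),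
    add_zero, zero_add] at hfilter

end Polynomial

namespace Matrix

variable {ι : Type*} [Fintype ι] [DecidableEq ι]

theorem eval_charpoly_add_smul_vecMulVec {R : Type*} [CommRing R] (A : Matrix ι ι R)
    (u v : ι → R) (τ : R) {z : R} (hz : z ∉ spectrum R A) :
    (A + τ • vecMulVec u v).charpoly.eval z =
      A.charpoly.eval z * (1 - τ * (v ⬝ᵥ ((z • (1 : Matrix ι ι R) - A)⁻¹ *ᵥ u))) := by
  have hunit : IsUnit (z • (1 : Matrix ι ι R) - A).det := by
    rwa [spectrum.mem_iff, not_not, Algebra.algebraMap_eq_smul_one, isUnit_iff_isUnit_det] at hz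
  have hsplit : z • (1 : Matrix ι ι R) - (A + τ • vecMulVec u v) =
      (z • 1 - A) + replicateCol Unit (-(τ • u)) * replicateRow Unit v := by
    ext i j
    simp only [sub_apply, smul_apply, smul_eq_mul, add_apply, vecMulVec_apply, mul_apply,
      Finset.univ_unique, PUnit.default_eq_unit, replicateCol_apply, Pi.neg_apply, Pi.smul_apply,
      replicateRow_apply, neg_mul, Finset.sum_neg_distrib, Finset.sum_const,
      Finset.card_singleton, one_smul]
    ring
  have hscalar : ∀ M : Matrix ι ι R, scalar ι z - M = z • 1 - M := fun M ↦ by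
    rw [scalar_apply, smul_one_eq_diagonal]
  rw [eval_charpoly, eval_charpoly, hscalar, hscalar, hsplit,
    det_add_replicateCol_mul_replicateRow hunit, Matrix.mul_assoc, ← replicateCol_mulVec,
    det_unique (1 + _ : Matrix Unit Unit R)]
  simp [replicateRow_mul_replicateCol_apply, mulVec_neg, mulVec_smul, sub_eq_add_neg]

variable {K : Type*} [Field K]

theorem mem_spectrum_iff_isRoot_minpoly (A : Matrix ι ι K) (z : K) :
    z ∈ spectrum K A ↔ (minpoly K A).IsRoot z := by
  let e := toLinAlgEquiv (Pi.basisFun K ι)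
  rw [← AlgEquiv.spectrum_eq e A, ← minpoly.algEquiv_eq e A,
    ← Module.End.hasEigenvalue_iff_mem_spectrum, Module.End.hasEigenvalue_iff_isRoot]

theorem charpoly_add_smul_vecMulVec_mul [Infinite K] (A : Matrix ι ι K) (u v : ι → K) (τ : K)
    {p q : K[X]}
    (hp : ∀ z : K, z ∉ spectrum K A →
      p.eval z = q.eval z * (v ⬝ᵥ ((z • (1 : Matrix ι ι K) - A)⁻¹ *ᵥ u))) :
    (A + τ • vecMulVec u v).charpoly * q = A.charpoly * (q - C τ * p) := by
  refine eq_of_infinite_eval_eq _ _ ((finite_spectrum A).infinite_compl.mono fun z hz ↦ ?_)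
  simp only [Set.mem_ofPred_eq, eval_mul, eval_sub, eval_C,
    eval_charpoly_add_smul_vecMulVec A u v τ hz, hp z hz]
  ring

end Matrix

theorem stmt_11_general (n : ℕ) (A : Matrix (Fin n) (Fin n) ℂ) (u v : Fin n → ℂ)
    (p : Polynomial ℂ)
    (hp : ∀ z : ℂ, z ∉ spectrum ℂ A →
      p.eval z = (minpoly ℂ A).eval z *
        (v ⬝ᵥ ((z • (1 : Matrix (Fin n) (Fin n) ℂ) - A)⁻¹ *ᵥ u)))
    (hcommon : ∀ z : ℂ, ¬(p.IsRoot z ∧ (minpoly ℂ A).IsRoot z))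
    (τ : ℂ) (hτ : τ ≠ 0) :
    Multiset.card (Multiset.filter (fun z => z ∉ spectrum ℂ A)
        (A + τ • Matrix.vecMulVec u v).charpoly.roots) = (minpoly ℂ A).natDegree ∧
      Multiset.filter (fun z => z ∉ spectrum ℂ A)
          (A + τ • Matrix.vecMulVec u v).charpoly.roots =
        (minpoly ℂ A - C τ * p).roots := by
  have hm : minpoly ℂ A ≠ 0 := minpoly.ne_zero (Algebra.IsIntegral.isIntegral A)
  have hkey := charpoly_add_smul_vecMulVec_mul A u v τ hp
  have hroots : ∀ z, (minpoly ℂ A - C τ * p).IsRoot z → z ∉ spectrum ℂ A := by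
    intro z hz hzA
    have hmz := (mem_spectrum_iff_isRoot_minpoly A z).1 hzA
    refine hcommon z ⟨?_, hmz⟩
    simpa [IsRoot, hmz.eq_zero, hτ] using hz
  have hfilter := filter_roots_eq_roots_of_mul_eq_mul hkey (charpoly_monic _).ne_zero hm
    (fun z ↦ (mem_spectrum_iff_isRoot_minpoly A z).2)
    (fun _ ↦ mem_spectrum_iff_isRoot_charpoly.2) hroots
  refine ⟨?_, hfilter⟩
  rw [hfilter, IsAlgClosed.card_roots_eq_natDegree, ← natDegree_eq_of_mul_eq_mul hkey
    (charpoly_monic _).ne_zero hm (by rw [charpoly_natDegree_eq_dim, charpoly_natDegree_eq_dim])]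

/-- If p_{uv} has degree l - 1 (l = deg of the minimal polynomial m of A) and no common
root with m, then for every τ ≠ 0 the matrix A + τ u vᵀ has exactly l eigenvalues,
counted with algebraic multiplicity, that are not eigenvalues of A, and these are
precisely the roots of m - τ p_{uv}. -/
theorem stmt_11 (n : ℕ) (A : Matrix (Fin n) (Fin n) ℂ) (u v : Fin n → ℂ)
    (p : Polynomial ℂ)
    (hp : ∀ z : ℂ, z ∉ spectrum ℂ A →
      p.eval z = (minpoly ℂ A).eval z *
        (v ⬝ᵥ ((z • (1 : Matrix (Fin n) (Fin n) ℂ) - A)⁻¹ *ᵥ u)))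
    (hpdeg : p.natDegree = (minpoly ℂ A).natDegree - 1)
    (hcommon : ∀ z : ℂ, ¬(p.IsRoot z ∧ (minpoly ℂ A).IsRoot z))
    (τ : ℂ) (hτ : τ ≠ 0) :
    Multiset.card (Multiset.filter (fun z => z ∉ spectrum ℂ A)
        (A + τ • Matrix.vecMulVec u v).charpoly.roots) = (minpoly ℂ A).natDegree ∧
      Multiset.filter (fun z => z ∉ spectrum ℂ A)
          (A + τ • Matrix.vecMulVec u v).charpoly.roots =
        (minpoly ℂ A - C τ * p).roots :=
  stmt_11_general n A u v p hp hcommon τ hτ
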